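/- Let $u:(0,+\infty)\to\overline{\mathrm{Dom}\phi}$. The following are equivalent: (a) $u$ is a continuous curve with values in $\mathrm{Dom}\phi$ satisfying the EVI$_\lambda$ differential inequality $\frac12\frac{d^+}{dt}d(u_t,v)^2+\frac\lambda2 d(u_t,v)^2\le\phi(v)-\phi(u_t)$ for all $t>0$ and $v\in\mathrm{Dom}\phi$; (b) the maps $t\mapsto\phi(u_t)$ and $t\mapsto d(u_t,v)^2$ are locally integrable on $(0,\infty)$ and $\frac12 d(u_t,v)^2-\frac12 d(u_s,v)^2+\int_s^t(\phi(u_r)+\frac\lambda2 d(u_r,v)^2)dr\le (t-s)\phi(v)$ for all $0<s<t$ and $v\in\mathrm{Dom}\phi$; (c) $\frac{e^{\lambda(t-s)}}2 d(u_t,v)^2-\frac12 d(u_s,v)^2\le \mathsf E_\lambda(t-s)\,(\phi(v)-\phi(u_t))$ for all $0<s<t$ and $v\in\mathrm{Dom}\phi$. In each case $t\mapsto\phi(u_t)$ is nonincreasing. -/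

import Mathlib

/-- Upper right Dini derivative, with values in `EReal`. -/
noncomputable def upperDiniDeriv (f : ℝ → ℝ) (t : ℝ) : EReal :=
  Filter.limsup (fun h => (((f (t + h) - f t) / h : ℝ) : EReal)) (nhdsWithin 0 (Set.Ioi 0))

/-- `E_λ(t) = ∫₀ᵗ e^{λ r} dr`. -/
noncomputable def Elam (lam t : ℝ) : ℝ :=
  if lam = 0 then t else (Real.exp (lam * t) - 1) / lam

/-- The pointwise `EVI_λ` differential inequality at time `t`. -/
noncomputable def EVIineq {X : Type*} [MetricSpace X]
    (φ : X → EReal) (lam : ℝ) (u : ℝ → X) (t : ℝ) : Prop :=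
  ∀ v : X, φ v ≠ ⊤ →
    ((1 / 2 : ℝ) : EReal) * upperDiniDeriv (fun s => dist (u s) v ^ 2) t +
      ((lam / 2 * dist (u t) v ^ 2 : ℝ) : EReal) ≤ φ v - φ (u t)

/-- A solution of `EVI_λ` on `(0, ∞)`: a continuous curve with values in `Dom φ`
satisfying the `EVI_λ` differential inequality. -/
noncomputable def IsEVISolution {X : Type*} [MetricSpace X]
    (φ : X → EReal) (lam : ℝ) (u : ℝ → X) : Prop :=
  ContinuousOn u (Set.Ioi 0) ∧ (∀ t ∈ Set.Ioi (0:ℝ), φ (u t) ≠ ⊤) ∧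
  ∀ t ∈ Set.Ioi (0:ℝ), EVIineq φ lam u t

/-!
The three formulations are compared through real functions of time. Along an EVI solution the
weighted squared distance `e^{λ(r-c)} d(u_r, v)²` has upper right Dini derivative at most
`2 e^{λ(r-c)} (φ v - φ(u_r))`, and a continuous function with nonpositive upper right Dini
derivative is nonincreasing. Taking `v = u_c` with `c` the supremum of a sublevel set of `φ ∘ u`
shows that `φ ∘ u` is nonincreasing; then (c) follows by comparing the weighted distance with
`2 (φ v - φ(u_t)) E_λ(r - s)`, and (b) by adding to `½ d(u_r, v)²` the primitive of
`φ(u_r) + λ/2 d(u_r, v)²`.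

Conversely, (c) with `v = u_s` bounds `d(u_t, u_s)²` by a multiple of `(t - s)(φ(u_s) - φ(u_t))`,
which gives monotonicity and continuity, and dividing (c) by `t - s` recovers the EVI. From (b) with
`v = u_p`, a Gronwall estimate on short intervals bounds `d(u_r, u_p)²` by `4 E` whenever `E`
bounds `∫_p^r (φ(u_p) - φ(u_ρ)) dρ`. With the lower semicontinuity of `φ` this gives monotonicity
by the same supremum argument, then continuity, and dividing (b) by `t - s` recovers the EVI.
-/

open Filter Set MeasureTheory Topology

lemma map_add_nhdsGT_zero (x : ℝ) : map (x + ·) (𝓝[>] 0) = 𝓝[>] x := by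
  have h := Filter.map_add_left_nhdsGT (c := x) (a := (0 : ℝ))
  rwa [add_zero] at h

lemma ContinuousAt.tendsto_comp_add_nhdsGT {α : Type*} [TopologicalSpace α] {f : ℝ → α}
    {x : ℝ} (hf : ContinuousAt f x) : Tendsto (fun h => f (x + h)) (𝓝[>] 0) (𝓝 (f x)) :=
  hf.tendsto.comp ((map_add_nhdsGT_zero x).le.trans nhdsWithin_le_nhds)

lemma upperDiniDeriv_le_iff {f : ℝ → ℝ} {x l : ℝ} :
    upperDiniDeriv f x ≤ l ↔ ∀ ε > 0, ∀ᶠ h in 𝓝[>] 0, (f (x + h) - f x) / h < l + ε := by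
  constructor
  · intro hD ε hε
    have hlt : upperDiniDeriv f x < ((l + ε : ℝ) : EReal) :=
      hD.trans_lt (EReal.coe_lt_coe_iff.2 (by linarith))
    filter_upwards [eventually_lt_of_limsup_lt hlt] with h hh
    exact EReal.coe_lt_coe_iff.1 hh
  · intro H
    refine EReal.le_of_forall_lt_iff_le.1 fun z hz => ?_
    have hε : 0 < z - l := by exact_mod_cast sub_pos.2 (EReal.coe_lt_coe_iff.1 hz)
    refine limsup_le_of_le (by isBoundedDefault) ?_
    filter_upwards [H _ hε] with h hh
    exact EReal.coe_le_coe_iff.2 (by linarith)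

lemma upperDiniDeriv_le_of_tendsto {f R : ℝ → ℝ} {x l : ℝ}
    (hR : Tendsto R (𝓝[>] 0) (𝓝 l))
    (hf : ∀ᶠ h in 𝓝[>] 0, (f (x + h) - f x) / h ≤ R h) :
    upperDiniDeriv f x ≤ l :=
  upperDiniDeriv_le_iff.2 fun ε hε => by
    filter_upwards [hf, hR.eventually_lt_const (by linarith : l < l + ε)] with h h1 h2
    exact h1.trans_lt h2

lemma HasDerivAt.upperDiniDeriv_le {f : ℝ → ℝ} {f' x : ℝ} (hf : HasDerivAt f f' x) :
    upperDiniDeriv f x ≤ f' :=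
  upperDiniDeriv_le_of_tendsto (by simpa [div_eq_inv_mul] using hf.tendsto_slope_zero_right)
    (Eventually.of_forall fun _ => le_rfl)

lemma upperDiniDeriv_add_le {f g : ℝ → ℝ} {x l₁ l₂ : ℝ} (hf : upperDiniDeriv f x ≤ l₁)
    (hg : upperDiniDeriv g x ≤ l₂) :
    upperDiniDeriv (fun y => f y + g y) x ≤ ((l₁ + l₂ : ℝ) : EReal) := by
  rw [upperDiniDeriv_le_iff] at *
  intro ε hε
  filter_upwards [hf (ε / 2) (by linarith), hg (ε / 2) (by linarith)] with h h1 h2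
  rw [add_sub_add_comm, add_div]
  linarith

lemma upperDiniDeriv_sub_le {f g : ℝ → ℝ} {x l g' : ℝ} (hf : upperDiniDeriv f x ≤ l)
    (hg : HasDerivAt g g' x) : upperDiniDeriv (fun y => f y - g y) x ≤ ((l - g' : ℝ) : EReal) := by
  simpa [sub_eq_add_neg] using upperDiniDeriv_add_le hf hg.neg.upperDiniDeriv_le

lemma upperDiniDeriv_mul_le {w m : ℝ → ℝ} {x w' l : ℝ} (hw : HasDerivAt w w' x) (hwx : 0 < w x)
    (hm : upperDiniDeriv m x ≤ l) :
    upperDiniDeriv (fun y => w y * m y) x ≤ ((w x * l + w' * m x : ℝ) : EReal) := by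
  rw [upperDiniDeriv_le_iff] at *
  intro ε hε
  have hw₀ := hw.continuousAt.tendsto_comp_add_nhdsGT
  have hR : Tendsto (fun h => w (x + h) * (l + ε / (2 * w x)) + (w (x + h) - w x) / h * m x)
      (𝓝[>] 0) (𝓝 (w x * (l + ε / (2 * w x)) + w' * m x)) :=
    (hw₀.mul_const _).add (by simpa [div_eq_inv_mul] using
      hw.tendsto_slope_zero_right.mul_const (m x))
  have hlt : w x * (l + ε / (2 * w x)) + w' * m x < w x * l + w' * m x + ε := by
    field_simp
    linarith
  filter_upwards [hm (ε / (2 * w x)) (by positivity), hR.eventually_lt_const hlt,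
    hw₀.eventually (eventually_gt_nhds hwx)] with h hmh hRh hwh
  calc (w (x + h) * m (x + h) - w x * m x) / h
      = w (x + h) * ((m (x + h) - m x) / h) + (w (x + h) - w x) / h * m x := by ring
    _ ≤ w (x + h) * (l + ε / (2 * w x)) + (w (x + h) - w x) / h * m x := by gcongr
    _ < _ := hRh

lemma upperDiniDeriv_integral_le {g : ℝ → ℝ} {a b x l : ℝ} (hg : IntervalIntegrable g volume a b)
    (hx : x ∈ Ico a b) (hbound : ∀ ε > 0, ∀ᶠ ρ in 𝓝[>] x, g ρ < l + ε) :
    upperDiniDeriv (fun r => ∫ ρ in a..r, g ρ) x ≤ l := by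
  refine upperDiniDeriv_le_iff.2 fun ε hε => ?_
  obtain ⟨d, hd, hsub⟩ := mem_nhdsGT_iff_exists_Ioo_subset.1 (hbound (ε / 2) (by linarith))
  filter_upwards [Ioo_mem_nhdsGT (lt_min (sub_pos.2 hd) (sub_pos.2 hx.2))] with h hh
  have hxh : x + h ≤ b := by linarith [hh.2.trans_le (min_le_right _ _)]
  have hint : ∀ c ∈ Icc a b, IntervalIntegrable g volume a c := fun c hc =>
    hg.mono_set (uIcc_subset_uIcc left_mem_uIcc (mem_uIcc_of_le hc.1 hc.2))
  rw [intervalIntegral.integral_interval_sub_left (hint _ ⟨by linarith [hx.1, hh.1], hxh⟩)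
    (hint _ ⟨hx.1, hx.2.le⟩), div_lt_iff₀ hh.1]
  have hle := intervalIntegral.integral_mono_on_of_le_Ioo (by linarith [hh.1] : x ≤ x + h)
    ((hint _ ⟨hx.1, hx.2.le⟩).symm.trans (hint _ ⟨by linarith [hx.1, hh.1], hxh⟩))
    intervalIntegrable_const fun ρ hρ =>
      (hsub ⟨hρ.1, hρ.2.trans (by linarith [hh.2.trans_le (min_le_left _ _)])⟩).le
  rw [intervalIntegral.integral_const, smul_eq_mul, add_sub_cancel_left] at hle
  nlinarith [hh.1]

lemma le_of_upperDiniDeriv_nonpos {F : ℝ → ℝ} {a b : ℝ} (hab : a ≤ b)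
    (hF : ContinuousOn F (Icc a b)) (hD : ∀ x ∈ Ico a b, upperDiniDeriv F x ≤ 0) : F b ≤ F a := by
  refine image_le_of_liminf_slope_right_le_deriv_boundary hF le_rfl continuousOn_const
    (B := fun _ => F a) (B' := fun _ => 0) (fun x _ => hasDerivWithinAt_const x _ _)
    (fun x hx r hr => ?_)
    ⟨hab, le_rfl⟩
  rw [← map_add_nhdsGT_zero x, frequently_map]
  refine ((upperDiniDeriv_le_iff.1 (EReal.coe_zero ▸ hD x hx) r hr).mono fun h hh => ?_).frequently
  rw [slope_def_field]
  simpa using hh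

lemma hasDerivAt_Elam (lam t : ℝ) : HasDerivAt (Elam lam) (Real.exp (lam * t)) t := by
  unfold Elam
  split_ifs with hlam
  · simpa [hlam] using hasDerivAt_id' t
  · have h := (((hasDerivAt_id t).const_mul lam).exp.sub_const 1).div_const lam
    simpa [mul_div_assoc, hlam] using h

lemma Elam_zero (lam : ℝ) : Elam lam 0 = 0 := by
  simp [Elam]

lemma strictMono_Elam (lam : ℝ) : StrictMono (Elam lam) :=
  strictMono_of_deriv_pos fun t => (hasDerivAt_Elam lam t).deriv ▸ Real.exp_pos _

lemma Elam_pos {lam t : ℝ} (ht : 0 < t) : 0 < Elam lam t :=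
  Elam_zero lam ▸ strictMono_Elam lam ht

lemma Elam_le_mul_exp {lam t : ℝ} (ht : 0 ≤ t) : Elam lam t ≤ t * Real.exp (|lam| * t) := by
  have h := convex_Icc 0 t |>.image_sub_le_mul_sub_of_deriv_le
    (fun x _ => (hasDerivAt_Elam lam x).continuousAt.continuousWithinAt)
    (fun x _ => (hasDerivAt_Elam lam x).differentiableAt.differentiableWithinAt)
    (C := Real.exp (|lam| * t)) (fun x hx => by
      rw [interior_Icc] at hx
      rw [(hasDerivAt_Elam lam x).deriv, Real.exp_le_exp]
      nlinarith [le_abs_self lam, abs_nonneg lam, hx.1, hx.2])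
    0 ⟨le_rfl, ht⟩ t ⟨ht, le_rfl⟩ ht
  rw [Elam_zero] at h
  linarith

lemma continuous_Elam (lam : ℝ) : Continuous (Elam lam) :=
  continuous_iff_continuousAt.2 fun t => (hasDerivAt_Elam lam t).continuousAt

lemma tendsto_Elam_div (lam : ℝ) :
    Tendsto (fun h => Elam lam h / h) (𝓝[>] 0) (𝓝 1) := by
  simpa [Elam_zero, div_eq_inv_mul] using (hasDerivAt_Elam lam 0).tendsto_slope_zero_right

lemma tendsto_one_sub_exp_div (lam : ℝ) :
    Tendsto (fun h => (1 - Real.exp (lam * h)) / h) (𝓝[>] 0) (𝓝 (-lam)) := by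
  have hd : HasDerivAt (fun h => 1 - Real.exp (lam * h)) (-lam) 0 := by
    simpa using ((hasDerivAt_id (0 : ℝ)).const_mul lam).exp.const_sub 1
  simpa [div_eq_inv_mul] using hd.tendsto_slope_zero_right

/-- Gronwall's inequality on an interval short enough that no exponential factor appears. -/
lemma le_two_mul_of_le_add_mul_integral {f : ℝ → ℝ} {a b A K : ℝ} (hab : a ≤ b) (hA : 0 ≤ A)
    (hK : 0 ≤ K) (hKab : K * (b - a) ≤ 1 / 2) (hf0 : ∀ r ∈ Icc a b, 0 ≤ f r)
    (hf : IntervalIntegrable f volume a b)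
    (hle : ∀ r ∈ Ioc a b, f r ≤ A + K * ∫ ρ in a..r, f ρ) :
    (∫ ρ in a..b, f ρ) ≤ 2 * A * (b - a) ∧ ∀ r ∈ Ioc a b, f r ≤ 2 * A := by
  set H := ∫ ρ in a..b, f ρ
  have hH0 : 0 ≤ H := intervalIntegral.integral_nonneg hab hf0
  have hfH : ∀ r ∈ Ioc a b, f r ≤ A + K * H := fun r hr => (hle r hr).trans <| by
    gcongr
    exact intervalIntegral.integral_mono_interval le_rfl hr.1.le hr.2
      ((ae_restrict_iff' measurableSet_Ioc).2 (Eventually.of_forall fun ρ hρ =>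
        hf0 ρ (Ioc_subset_Icc_self hρ))) hf
  have hH : H ≤ (b - a) * (A + K * H) := by
    have := intervalIntegral.integral_mono_on_of_le_Ioo hab hf intervalIntegrable_const
      fun r hr => hfH r ⟨hr.1, hr.2.le⟩
    rwa [intervalIntegral.integral_const, smul_eq_mul] at this
  have hH2 : H ≤ 2 * A * (b - a) := by nlinarith [mul_le_mul_of_nonneg_right hKab hH0]
  refine ⟨hH2, fun r hr => (hfH r hr).trans ?_⟩
  nlinarith [mul_le_mul_of_nonneg_left hH2 hK]

lemma abs_mul_le_half_of_le {c d : ℝ} (hd0 : 0 ≤ d) (hd : d ≤ 1 / (2 * (|c| + 1))) :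
    |c| * d ≤ 1 / 2 := by
  rw [le_div_iff₀ (by positivity)] at hd
  nlinarith [abs_nonneg c]

lemma AntitoneOn.locallyIntegrableOn {f : ℝ → ℝ} {s : Set ℝ} (hf : AntitoneOn f s)
    (hs : IsLocallyClosed s) : LocallyIntegrableOn f s :=
  (locallyIntegrableOn_iff hs).2 fun _ hk hkc => (hf.mono hk).integrableOn_isCompact hkc

lemma MeasureTheory.LocallyIntegrableOn.intervalIntegrable_of_pos {f : ℝ → ℝ}
    (hf : LocallyIntegrableOn f (Ioi 0)) {p q : ℝ} (hp : 0 < p) (hpq : p ≤ q) :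
    IntervalIntegrable f volume p q :=
  (intervalIntegrable_iff_integrableOn_Icc_of_le hpq).2
    (hf.integrableOn_compact_subset (fun _ hx => hp.trans_le hx.1) isCompact_Icc)

lemma continuousAt_of_dist_sq_le {X : Type*} [MetricSpace X] {u : ℝ → X} {x δ K : ℝ}
    (hδ : 0 < δ)
    (h : ∀ p q, x - δ < p → p < q → q < x + δ → dist (u q) (u p) ^ 2 ≤ K * (q - p)) :
    ContinuousAt u x := by
  have hle : ∀ᶠ y in 𝓝 x, dist (u y) (u x) ≤ √(K * |y - x|) := by
    filter_upwards [Ioo_mem_nhds (by linarith : x - δ < x) (by linarith : x < x + δ)] with y hy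
    refine Real.le_sqrt_of_sq_le ?_
    rcases lt_trichotomy y x with hyx | rfl | hxy
    · rw [dist_comm, abs_of_neg (sub_neg.2 hyx), neg_sub]
      exact h y x hy.1 hyx (by linarith)
    · simp
    · rw [abs_of_pos (sub_pos.2 hxy)]
      exact h x y (by linarith) hxy hy.2
  have hlim : Tendsto (fun y => √(K * |y - x|)) (𝓝 x) (𝓝 0) := by
    have : Continuous fun y => √(K * |y - x|) := by fun_prop
    simpa using this.tendsto x
  exact tendsto_iff_dist_tendsto_zero.2
    (squeeze_zero' (Eventually.of_forall fun _ => dist_nonneg) hle hlim)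

lemma EReal.coe_half_mul_add_le_coe_iff {D : EReal} {c e : ℝ} :
    ((1 / 2 : ℝ) : EReal) * D + c ≤ e ↔ D ≤ ↑(2 * (e - c)) := by
  induction D using EReal.rec with
  | bot => simp only [EReal.coe_mul_bot_of_pos (by norm_num : (0 : ℝ) < 1 / 2), EReal.bot_add,
      bot_le]
  | top =>
    simp only [EReal.coe_mul_top_of_pos (by norm_num : (0 : ℝ) < 1 / 2), EReal.top_add_coe,
      top_le_iff, EReal.coe_ne_top]
  | coe d =>
    rw [← EReal.coe_mul, ← EReal.coe_add, EReal.coe_le_coe_iff, EReal.coe_le_coe_iff]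
    constructor <;> intro h <;> linarith

lemma EReal.sub_eq_coe_toReal_sub {a b : EReal} (ha : a ≠ ⊤) (ha' : a ≠ ⊥) (hb : b ≠ ⊤)
    (hb' : b ≠ ⊥) : a - b = ((a.toReal - b.toReal : ℝ) : EReal) := by
  rw [EReal.coe_sub, EReal.coe_toReal ha ha', EReal.coe_toReal hb hb']

section EVI

variable {X : Type*} [MetricSpace X] {φ : X → EReal} {lam : ℝ} {u : ℝ → X}

def IsIntegratedEVISolution (φ : X → EReal) (lam : ℝ) (u : ℝ → X) : Prop :=
  (∀ t ∈ Set.Ioi (0:ℝ), φ (u t) ≠ ⊤) ∧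
  LocallyIntegrableOn (fun r => (φ (u r)).toReal) (Set.Ioi 0) ∧
  ∀ v : X, φ v ≠ ⊤ →
    LocallyIntegrableOn (fun r => dist (u r) v ^ 2) (Set.Ioi 0) ∧
    ∀ s t : ℝ, 0 < s → s < t →
      (1 / 2) * dist (u t) v ^ 2 - (1 / 2) * dist (u s) v ^ 2 +
          ∫ r in s..t, ((φ (u r)).toReal + lam / 2 * dist (u r) v ^ 2) ≤
        (t - s) * (φ v).toReal

def IsExponentialEVISolution (φ : X → EReal) (lam : ℝ) (u : ℝ → X) : Prop :=
  ∀ s t : ℝ, 0 < s → s < t → ∀ v : X, φ v ≠ ⊤ →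
    ((Real.exp (lam * (t - s)) / 2 * dist (u t) v ^ 2
        - 1 / 2 * dist (u s) v ^ 2 : ℝ) : EReal) ≤
      ((Elam lam (t - s) : ℝ) : EReal) * (φ v - φ (u t))

lemma EVIineq_iff (hbot : ∀ y, φ y ≠ ⊥) {t : ℝ} (ht : φ (u t) ≠ ⊤) :
    EVIineq φ lam u t ↔ ∀ v, φ v ≠ ⊤ → upperDiniDeriv (fun s => dist (u s) v ^ 2) t ≤
      ((2 * ((φ v).toReal - (φ (u t)).toReal) - lam * dist (u t) v ^ 2 : ℝ) : EReal) := by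
  refine forall₂_congr fun v hv => ?_
  have hsub : φ v - φ (u t) = ((φ v).toReal - (φ (u t)).toReal : ℝ) := by
    rw [EReal.coe_sub, EReal.coe_toReal hv (hbot v), EReal.coe_toReal ht (hbot _)]
  rw [hsub, EReal.coe_half_mul_add_le_coe_iff]
  exact Iff.of_eq (by congr 2; ring)

lemma tendsto_toReal_comp_add_nhdsGT (hbot : ∀ y, φ y ≠ ⊥) (hlsc : LowerSemicontinuous φ)
    (hfin : ∀ t ∈ Ioi (0 : ℝ), φ (u t) ≠ ⊤)
    (hmono : AntitoneOn (fun r => (φ (u r)).toReal) (Ioi 0)) {x : ℝ} (hx : 0 < x)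
    (hu : ContinuousAt u x) :
    Tendsto (fun h => (φ (u (x + h))).toReal) (𝓝[>] 0) (𝓝 (φ (u x)).toReal) := by
  have hux := hu.tendsto_comp_add_nhdsGT
  refine tendsto_order.2 ⟨fun y hy => ?_, fun y hy => ?_⟩
  · have hlt : (y : EReal) < φ (u x) := by
      rwa [← EReal.coe_toReal (hfin x hx) (hbot _), EReal.coe_lt_coe_iff]
    filter_upwards [hux.eventually (hlsc _ _ hlt), self_mem_nhdsWithin] with h hh (hpos : 0 < h)
    rw [← EReal.coe_toReal (hfin _ (add_pos hx hpos)) (hbot _)] at hh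
    exact EReal.coe_lt_coe_iff.1 hh
  · filter_upwards [self_mem_nhdsWithin] with h (hpos : 0 < h)
    exact (hmono hx (add_pos hx hpos) (le_add_of_nonneg_right hpos.le)).trans_lt hy

namespace IsEVISolution

lemma upperDiniDeriv_le (h : IsEVISolution φ lam u) (hbot : ∀ y, φ y ≠ ⊥) {x : ℝ} (hx : 0 < x)
    {v : X} (hv : φ v ≠ ⊤) :
    upperDiniDeriv (fun r => dist (u r) v ^ 2) x ≤
      ((2 * ((φ v).toReal - (φ (u x)).toReal) - lam * dist (u x) v ^ 2 : ℝ) : EReal) :=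
  (EVIineq_iff hbot (h.2.1 x hx)).1 (h.2.2 x hx) v hv

lemma upperDiniDeriv_exp_mul_le (h : IsEVISolution φ lam u) (hbot : ∀ y, φ y ≠ ⊥) (c : ℝ)
    {x : ℝ} (hx : 0 < x) {v : X} (hv : φ v ≠ ⊤) :
    upperDiniDeriv (fun r => Real.exp (lam * (r - c)) * dist (u r) v ^ 2) x ≤
      ((2 * Real.exp (lam * (x - c)) * ((φ v).toReal - (φ (u x)).toReal) : ℝ) : EReal) := by
  have hw : HasDerivAt (fun r => Real.exp (lam * (r - c))) (Real.exp (lam * (x - c)) * lam) x := by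
    simpa using (((hasDerivAt_id x).sub_const c).const_mul lam).exp
  refine (upperDiniDeriv_mul_le hw (Real.exp_pos _) (h.upperDiniDeriv_le hbot hx hv)).trans_eq ?_
  congr 1
  ring

lemma eq_of_forall_toReal_le (h : IsEVISolution φ lam u) (hbot : ∀ y, φ y ≠ ⊥) {c t : ℝ}
    (hc : 0 < c) (hct : c ≤ t) (hle : ∀ x ∈ Ico c t, (φ (u c)).toReal ≤ (φ (u x)).toReal) :
    u t = u c := by
  have hu := h.1.mono ((Icc_subset_Ioi_iff hct).2 hc)
  have hF := le_of_upperDiniDeriv_nonpos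
    (F := fun r => Real.exp (lam * (r - c)) * dist (u r) (u c) ^ 2)
    hct (by fun_prop) fun x hx => (h.upperDiniDeriv_exp_mul_le hbot c (hc.trans_le hx.1)
      (h.2.1 c hc)).trans (EReal.coe_nonpos.2 (mul_nonpos_of_nonneg_of_nonpos (by positivity)
        (sub_nonpos.2 (hle x hx))))
  simp only [dist_self, sub_self] at hF
  have hd : dist (u t) (u c) ^ 2 ≤ 0 := by nlinarith [Real.exp_pos (lam * (t - c))]
  exact dist_eq_zero.1 (pow_eq_zero_iff two_ne_zero |>.1 (le_antisymm hd (sq_nonneg _)))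

/-- At the supremum `c` of the sublevel set `{φ ∘ u ≤ φ (u s)}` in `[s, t]`, the energy stays above
`φ (u c)` on `[c, t)`, so the curve does not move after `c`. -/
lemma antitoneOn (h : IsEVISolution φ lam u) (hbot : ∀ y, φ y ≠ ⊥)
    (hlsc : LowerSemicontinuous φ) : AntitoneOn (fun r => φ (u r)) (Ioi 0) := by
  intro s hs t _ hst
  set S := Icc s t ∩ (fun r => φ (u r)) ⁻¹' Iic (φ (u s))
  have hS : IsCompact S := ((hlsc.lowerSemicontinuousOn univ).comp
    (h.1.mono ((Icc_subset_Ioi_iff hst).2 hs)) (mapsTo_univ _ _)).isCompact_inter_preimage_Iic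
    isCompact_Icc _
  have hcS : sSup S ∈ S := hS.sSup_mem ⟨s, ⟨le_rfl, hst⟩, le_refl (φ (u s))⟩
  have hc : 0 < sSup S := lt_of_lt_of_le hs hcS.1.1
  have hut := h.eq_of_forall_toReal_le hbot hc hcS.1.2 fun x hx => by
    rcases hx.1.eq_or_lt with rfl | hcx
    · rfl
    have hxS : x ∉ S := fun hx' => (le_csSup hS.bddAbove hx').not_gt hcx
    have hlt : φ (u s) < φ (u x) :=
      not_le.1 fun hle => hxS ⟨⟨hcS.1.1.trans hcx.le, hx.2.le⟩, hle⟩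
    exact EReal.toReal_le_toReal (hcS.2.trans hlt.le) (hbot _) (h.2.1 x (hc.trans hcx))
  simpa [hut] using hcS.2

lemma antitoneOn_toReal (h : IsEVISolution φ lam u) (hbot : ∀ y, φ y ≠ ⊥)
    (hlsc : LowerSemicontinuous φ) : AntitoneOn (fun r => (φ (u r)).toReal) (Ioi 0) :=
  fun _ hs _ ht hst =>
    EReal.toReal_le_toReal (h.antitoneOn hbot hlsc hs ht hst) (hbot _) (h.2.1 _ hs)

lemma isExponentialEVISolution (h : IsEVISolution φ lam u) (hbot : ∀ y, φ y ≠ ⊥)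
    (hlsc : LowerSemicontinuous φ) : IsExponentialEVISolution φ lam u := by
  intro s t hs hst v hv
  rw [EReal.sub_eq_coe_toReal_sub hv (hbot v) (h.2.1 t (hs.trans hst)) (hbot _), ← EReal.coe_mul,
    EReal.coe_le_coe_iff]
  set a := (φ v).toReal
  set b := (φ (u t)).toReal
  have hu := h.1.mono ((Icc_subset_Ioi_iff hst.le).2 hs)
  have hElam := continuous_Elam lam
  have hF := le_of_upperDiniDeriv_nonpos (F := fun r => Real.exp (lam * (r - s)) *
      dist (u r) v ^ 2 - 2 * (a - b) * Elam lam (r - s)) hst.le (by fun_prop) fun x hx => by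
    have hB : HasDerivAt (fun r => 2 * (a - b) * Elam lam (r - s))
        (2 * (a - b) * Real.exp (lam * (x - s))) x :=
      ((hasDerivAt_Elam lam (x - s)).comp_sub_const x s).const_mul _
    refine (upperDiniDeriv_sub_le (h.upperDiniDeriv_exp_mul_le hbot s (hs.trans_le hx.1) hv)
      hB).trans (EReal.coe_nonpos.2 ?_)
    have hbx : b ≤ (φ (u x)).toReal :=
      h.antitoneOn_toReal hbot hlsc (hs.trans_le hx.1) (hs.trans hst) hx.2.le
    nlinarith [Real.exp_pos (lam * (x - s))]
  simp only [sub_self, mul_zero, Real.exp_zero, one_mul, Elam_zero, sub_zero] at hF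
  linarith

lemma locallyIntegrableOn_toReal (h : IsEVISolution φ lam u) (hbot : ∀ y, φ y ≠ ⊥)
    (hlsc : LowerSemicontinuous φ) :
    LocallyIntegrableOn (fun r => (φ (u r)).toReal) (Ioi 0) :=
  (h.antitoneOn_toReal hbot hlsc).locallyIntegrableOn isOpen_Ioi.isLocallyClosed

lemma upperDiniDeriv_half_dist_sq_add_integral_le (h : IsEVISolution φ lam u)
    (hbot : ∀ y, φ y ≠ ⊥) (hlsc : LowerSemicontinuous φ) {v : X} (hv : φ v ≠ ⊤) {s t x : ℝ}
    (hs : 0 < s) (hg : IntervalIntegrable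
      (fun r => (φ (u r)).toReal + lam / 2 * dist (u r) v ^ 2) volume s t) (hx : x ∈ Ico s t) :
    upperDiniDeriv (fun r => 1 / 2 * dist (u r) v ^ 2 +
      ∫ ρ in s..r, ((φ (u ρ)).toReal + lam / 2 * dist (u ρ) v ^ 2)) x ≤ ((φ v).toReal : EReal) := by
  have hx0 : 0 < x := hs.trans_le hx.1
  have hux := h.1.continuousAt (isOpen_Ioi.mem_nhds hx0)
  have hm : ContinuousAt (fun r => lam / 2 * dist (u r) v ^ 2) x := by fun_prop
  have hhalf := upperDiniDeriv_mul_le (hasDerivAt_const x (1 / 2 : ℝ)) one_half_pos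
    (h.upperDiniDeriv_le hbot hx0 hv)
  have hint := upperDiniDeriv_integral_le hg hx
    (l := (φ (u x)).toReal + lam / 2 * dist (u x) v ^ 2) fun ε hε => by
      filter_upwards [self_mem_nhdsWithin,
        nhdsWithin_le_nhds (hm.eventually (gt_mem_nhds (lt_add_of_pos_right _ hε)))] with ρ hρ hρm
      have := h.antitoneOn_toReal hbot hlsc hx0 (hx0.trans hρ) hρ.le
      linarith
  exact (upperDiniDeriv_add_le hhalf hint).trans_eq (by congr 1; ring)

lemma half_dist_sq_sub_add_integral_le (h : IsEVISolution φ lam u) (hbot : ∀ y, φ y ≠ ⊥)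
    (hlsc : LowerSemicontinuous φ) {v : X} (hv : φ v ≠ ⊤) {s t : ℝ} (hs : 0 < s) (hst : s < t) :
    1 / 2 * dist (u t) v ^ 2 - 1 / 2 * dist (u s) v ^ 2 +
      ∫ r in s..t, ((φ (u r)).toReal + lam / 2 * dist (u r) v ^ 2) ≤ (t - s) * (φ v).toReal := by
  have hu := h.1.mono ((Icc_subset_Ioi_iff hst.le).2 hs)
  have hg : IntervalIntegrable (fun r => (φ (u r)).toReal + lam / 2 * dist (u r) v ^ 2)
      volume s t :=
    ((h.locallyIntegrableOn_toReal hbot hlsc).intervalIntegrable_of_pos hs hst.le).add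
      (ContinuousOn.intervalIntegrable (by rw [uIcc_of_le hst.le]; fun_prop))
  have hprim := intervalIntegral.continuousOn_primitive_interval' hg left_mem_uIcc
  rw [uIcc_of_le hst.le] at hprim
  have hF := le_of_upperDiniDeriv_nonpos (F := fun r => 1 / 2 * dist (u r) v ^ 2 +
      (∫ ρ in s..r, ((φ (u ρ)).toReal + lam / 2 * dist (u ρ) v ^ 2)) - (φ v).toReal * r) hst.le
    (by fun_prop) fun x hx =>
      (upperDiniDeriv_sub_le (h.upperDiniDeriv_half_dist_sq_add_integral_le hbot hlsc hv hs hg hx)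
        ((hasDerivAt_id x).const_mul _)).trans (by simp)
  simp only [intervalIntegral.integral_same] at hF
  linarith

lemma isIntegratedEVISolution (h : IsEVISolution φ lam u) (hbot : ∀ y, φ y ≠ ⊥)
    (hlsc : LowerSemicontinuous φ) : IsIntegratedEVISolution φ lam u :=
  ⟨h.2.1, h.locallyIntegrableOn_toReal hbot hlsc, fun _ hv =>
    ⟨ContinuousOn.locallyIntegrableOn (by have hu := h.1; fun_prop) measurableSet_Ioi,
      fun _ _ hs hst => h.half_dist_sq_sub_add_integral_le hbot hlsc hv hs hst⟩⟩

end IsEVISolution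

namespace IsExponentialEVISolution

lemma ne_top (h : IsExponentialEVISolution φ lam u) (hproper : ∃ y, φ y ≠ ⊤) {t : ℝ}
    (ht : 0 < t) : φ (u t) ≠ ⊤ := by
  intro htop
  obtain ⟨v, hv⟩ := hproper
  have hC := h (t / 2) t (by linarith) (by linarith) v hv
  rw [htop, EReal.sub_top, EReal.coe_mul_bot_of_pos (Elam_pos (by linarith))] at hC
  exact EReal.coe_ne_bot _ (le_bot_iff.1 hC)

lemma le_toReal (h : IsExponentialEVISolution φ lam u) (hbot : ∀ y, φ y ≠ ⊥)
    (hproper : ∃ y, φ y ≠ ⊤) {s t : ℝ} (hs : 0 < s) (hst : s < t) {v : X} (hv : φ v ≠ ⊤) :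
    Real.exp (lam * (t - s)) / 2 * dist (u t) v ^ 2 - 1 / 2 * dist (u s) v ^ 2 ≤
      Elam lam (t - s) * ((φ v).toReal - (φ (u t)).toReal) := by
  have hC := h s t hs hst v hv
  rwa [EReal.sub_eq_coe_toReal_sub hv (hbot v) (h.ne_top hproper (hs.trans hst)) (hbot _),
    ← EReal.coe_mul, EReal.coe_le_coe_iff] at hC

lemma exp_mul_dist_sq_le (h : IsExponentialEVISolution φ lam u) (hbot : ∀ y, φ y ≠ ⊥)
    (hproper : ∃ y, φ y ≠ ⊤) {s t : ℝ} (hs : 0 < s) (hst : s < t) :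
    Real.exp (lam * (t - s)) / 2 * dist (u t) (u s) ^ 2 ≤
      Elam lam (t - s) * ((φ (u s)).toReal - (φ (u t)).toReal) := by
  simpa using h.le_toReal hbot hproper hs hst (h.ne_top hproper hs)

lemma antitoneOn_toReal (h : IsExponentialEVISolution φ lam u) (hbot : ∀ y, φ y ≠ ⊥)
    (hproper : ∃ y, φ y ≠ ⊤) : AntitoneOn (fun r => (φ (u r)).toReal) (Ioi 0) := by
  intro s hs t _ hst
  rcases hst.eq_or_lt with rfl | hst
  · rfl
  have hC := h.exp_mul_dist_sq_le hbot hproper hs hst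
  have h0 : 0 ≤ Real.exp (lam * (t - s)) / 2 * dist (u t) (u s) ^ 2 := by positivity
  simpa using nonneg_of_mul_nonneg_right (h0.trans hC) (Elam_pos (sub_pos.2 hst))

lemma dist_sq_le (h : IsExponentialEVISolution φ lam u) (hbot : ∀ y, φ y ≠ ⊥)
    (hproper : ∃ y, φ y ≠ ⊤) {s t : ℝ} (hs : 0 < s) (hst : s < t) :
    dist (u t) (u s) ^ 2 ≤
      2 * (t - s) * Real.exp (2 * |lam| * (t - s)) * ((φ (u s)).toReal - (φ (u t)).toReal) := by
  have hC := h.exp_mul_dist_sq_le hbot hproper hs hst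
  have hΔ : 0 ≤ (φ (u s)).toReal - (φ (u t)).toReal :=
    sub_nonneg.2 (h.antitoneOn_toReal hbot hproper hs (mem_Ioi.2 (hs.trans hst)) hst.le)
  have hE := Elam_le_mul_exp (lam := lam) (sub_pos.2 hst).le
  have hexp : Real.exp (-(lam * (t - s))) ≤ Real.exp (|lam| * (t - s)) :=
    Real.exp_le_exp.2 (by nlinarith [neg_abs_le lam, sub_pos.2 hst])
  calc dist (u t) (u s) ^ 2
      = 2 * Real.exp (-(lam * (t - s))) *
          (Real.exp (lam * (t - s)) / 2 * dist (u t) (u s) ^ 2) := by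
        rw [Real.exp_neg]; field_simp
    _ ≤ 2 * Real.exp (|lam| * (t - s)) *
          ((t - s) * Real.exp (|lam| * (t - s)) * ((φ (u s)).toReal - (φ (u t)).toReal)) := by
        have := hC.trans (mul_le_mul_of_nonneg_right hE hΔ)
        gcongr
    _ = _ := by rw [mul_assoc 2 |lam|, two_mul (|lam| * _), Real.exp_add]; ring

lemma continuousAt (h : IsExponentialEVISolution φ lam u) (hbot : ∀ y, φ y ≠ ⊥)
    (hproper : ∃ y, φ y ≠ ⊤) {x : ℝ} (hx : 0 < x) : ContinuousAt u x := by
  set δ := min (x / 2) (1 / 2)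
  have hδ : 0 < δ := by positivity
  have hδx : δ ≤ x / 2 := min_le_left _ _
  have hδ1 : δ ≤ 1 / 2 := min_le_right _ _
  have hmono := h.antitoneOn_toReal hbot hproper
  refine continuousAt_of_dist_sq_le (K := 2 * Real.exp (2 * |lam|) *
    ((φ (u (x - δ))).toReal - (φ (u (x + δ))).toReal)) hδ fun p q hp hpq hq => ?_
  have hp0 : 0 < p := by linarith
  calc dist (u q) (u p) ^ 2
      ≤ 2 * (q - p) * Real.exp (2 * |lam| * (q - p)) * ((φ (u p)).toReal - (φ (u q)).toReal) :=
        h.dist_sq_le hbot hproper hp0 hpq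
    _ ≤ 2 * (q - p) * Real.exp (2 * |lam|) *
          ((φ (u (x - δ))).toReal - (φ (u (x + δ))).toReal) := by
        have hΔ := sub_nonneg.2 (hmono hp0 (mem_Ioi.2 (hp0.trans hpq)) hpq.le)
        have hexp : Real.exp (2 * |lam| * (q - p)) ≤ Real.exp (2 * |lam|) :=
          Real.exp_le_exp.2 (by nlinarith [abs_nonneg lam])
        have hΔle : (φ (u p)).toReal - (φ (u q)).toReal ≤
            (φ (u (x - δ))).toReal - (φ (u (x + δ))).toReal :=
          sub_le_sub (hmono (mem_Ioi.2 (by linarith)) hp0 hp.le)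
            (hmono (mem_Ioi.2 (hp0.trans hpq)) (mem_Ioi.2 (by linarith)) hq.le)
        have hpq' : 0 ≤ q - p := by linarith
        gcongr
    _ = _ := by ring

lemma upperDiniDeriv_le (h : IsExponentialEVISolution φ lam u) (hbot : ∀ y, φ y ≠ ⊥)
    (hproper : ∃ y, φ y ≠ ⊤) (hlsc : LowerSemicontinuous φ) {x : ℝ} (hx : 0 < x) {v : X}
    (hv : φ v ≠ ⊤) :
    upperDiniDeriv (fun r => dist (u r) v ^ 2) x ≤
      ((2 * ((φ v).toReal - (φ (u x)).toReal) - lam * dist (u x) v ^ 2 : ℝ) : EReal) := by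
  have hux := h.continuousAt hbot hproper hx
  have hψ := tendsto_toReal_comp_add_nhdsGT hbot hlsc (fun t ht => h.ne_top hproper ht)
    (h.antitoneOn_toReal hbot hproper) hx hux
  have hm : ContinuousAt (fun r => dist (u r) v ^ 2) x := by fun_prop
  have hR := (((tendsto_Elam_div lam).mul
    ((tendsto_const_nhds (x := (φ v).toReal)).sub hψ)).const_mul 2).add
    ((tendsto_one_sub_exp_div lam).mul hm.tendsto_comp_add_nhdsGT)
  refine upperDiniDeriv_le_of_tendsto (by convert hR using 2; ring) ?_
  filter_upwards [self_mem_nhdsWithin] with r (hr : 0 < r)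
  have hC := h.le_toReal hbot hproper hx (lt_add_of_pos_right x hr) hv
  rw [add_sub_cancel_left] at hC
  calc (dist (u (x + r)) v ^ 2 - dist (u x) v ^ 2) / r
      ≤ (2 * (Elam lam r * ((φ v).toReal - (φ (u (x + r))).toReal)) +
          (1 - Real.exp (lam * r)) * dist (u (x + r)) v ^ 2) / r := by
        gcongr
        linarith
    _ = _ := by ring

lemma isEVISolution (h : IsExponentialEVISolution φ lam u) (hbot : ∀ y, φ y ≠ ⊥)
    (hproper : ∃ y, φ y ≠ ⊤) (hlsc : LowerSemicontinuous φ) : IsEVISolution φ lam u :=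
  ⟨fun _ ht => (h.continuousAt hbot hproper ht).continuousWithinAt,
    fun _ ht => h.ne_top hproper ht,
    fun _ ht => (EVIineq_iff hbot (h.ne_top hproper ht)).2
      fun _ hv => h.upperDiniDeriv_le hbot hproper hlsc ht hv⟩

end IsExponentialEVISolution

namespace IsIntegratedEVISolution

lemma half_dist_sq_le (h : IsIntegratedEVISolution φ lam u) {p r : ℝ} (hp : 0 < p)
    (hpr : p < r) :
    1 / 2 * dist (u r) (u p) ^ 2 ≤ (∫ ρ in p..r, ((φ (u p)).toReal - (φ (u ρ)).toReal)) +
      |lam| / 2 * ∫ ρ in p..r, dist (u ρ) (u p) ^ 2 := by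
  obtain ⟨hm, hineq⟩ := h.2.2 (u p) (h.1 p hp)
  have hψI := h.2.1.intervalIntegrable_of_pos hp hpr.le
  have hmI := hm.intervalIntegrable_of_pos hp hpr.le
  have hB := hineq p r hp hpr
  rw [intervalIntegral.integral_add hψI (hmI.const_mul _), intervalIntegral.integral_const_mul,
    dist_self] at hB
  rw [intervalIntegral.integral_sub intervalIntegrable_const hψI, intervalIntegral.integral_const,
    smul_eq_mul]
  have hnn : 0 ≤ ∫ ρ in p..r, dist (u ρ) (u p) ^ 2 :=
    intervalIntegral.integral_nonneg hpr.le fun _ _ => sq_nonneg _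
  nlinarith [mul_nonneg (by linarith [neg_abs_le lam] : 0 ≤ |lam| + lam) hnn]

lemma dist_sq_le_of_integral_le (h : IsIntegratedEVISolution φ lam u) {p q E : ℝ}
    (hp : 0 < p) (hpq : p < q) (hq : |lam| * (q - p) ≤ 1 / 2) (hE0 : 0 ≤ E)
    (hE : ∀ r ∈ Ioc p q, ∫ ρ in p..r, ((φ (u p)).toReal - (φ (u ρ)).toReal) ≤ E) :
    (∫ ρ in p..q, dist (u ρ) (u p) ^ 2) ≤ 4 * E * (q - p) ∧
      ∀ r ∈ Ioc p q, dist (u r) (u p) ^ 2 ≤ 4 * E := by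
  have hG := le_two_mul_of_le_add_mul_integral hpq.le (by positivity : 0 ≤ 2 * E) (abs_nonneg lam)
    hq (fun _ _ => sq_nonneg _) ((h.2.2 (u p) (h.1 p hp)).1.intervalIntegrable_of_pos hp hpq.le)
    fun r hr => by linarith [h.half_dist_sq_le hp hr.1, hE r hr]
  exact ⟨by linarith [hG.1], fun r hr => by linarith [hG.2 r hr]⟩

/-- If `φ ∘ u > φ (u c)` on `(c, t]`, the Gronwall estimate with `E = 0` keeps `u` at `u c`
on a short interval, and then (b) with `v = u c` contradicts `∫ (φ (u ρ) - φ (u c)) > 0`. -/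
lemma exists_toReal_le_of_lt (h : IsIntegratedEVISolution φ lam u) {c t : ℝ} (hc : 0 < c)
    (hct : c < t) : ∃ x ∈ Ioc c t, (φ (u x)).toReal ≤ (φ (u c)).toReal := by
  by_contra! hlt
  set q := min t (c + 1 / (2 * (|lam| + 1)))
  have hcq : c < q := lt_min hct (by simp only [lt_add_iff_pos_right]; positivity)
  have hq : |lam| * (q - c) ≤ 1 / 2 :=
    abs_mul_le_half_of_le (by linarith) (by linarith [min_le_right t (c + 1 / (2 * (|lam| + 1)))])
  have hneg : ∀ r ∈ Ioc c q, ∫ ρ in c..r, ((φ (u c)).toReal - (φ (u ρ)).toReal) < 0 := by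
    intro r hr
    have hpos := intervalIntegral.intervalIntegral_pos_of_pos_on
      ((h.2.1.intervalIntegrable_of_pos hc hr.1.le).sub intervalIntegrable_const)
      (fun ρ hρ => sub_pos.2 (hlt ρ ⟨hρ.1, hρ.2.le.trans (hr.2.trans (min_le_left _ _))⟩)) hr.1
    rw [← neg_neg (∫ ρ in c..r, _), ← intervalIntegral.integral_neg]
    simpa using hpos
  have hG := h.dist_sq_le_of_integral_le hc hcq hq le_rfl fun r hr => (hneg r hr).le
  have := h.half_dist_sq_le hc hcq
  nlinarith [hneg q ⟨hcq, le_rfl⟩, sq_nonneg (dist (u q) (u c)), hG.1, abs_nonneg lam]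

lemma dist_sq_le_of_toReal_le (h : IsIntegratedEVISolution φ lam u) {s r c : ℝ} (hs : 0 < s)
    (hsr : s ≤ r) (hrc : r < c) (hr : (φ (u r)).toReal ≤ (φ (u s)).toReal)
    (hsmall : |lam| * (c - r) ≤ 1 / 2) :
    dist (u c) (u r) ^ 2 ≤ 4 * ∫ ρ in r..c, |(φ (u s)).toReal - (φ (u ρ)).toReal| := by
  have hr0 := hs.trans_le hsr
  have hW : ∀ r', r ≤ r' → IntervalIntegrable (fun ρ => |(φ (u s)).toReal - (φ (u ρ)).toReal|)
      volume r r' := fun r' hr' =>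
    (intervalIntegrable_const.sub (h.2.1.intervalIntegrable_of_pos hr0 hr')).abs
  have hE := h.dist_sq_le_of_integral_le hr0 hrc hsmall
    (intervalIntegral.integral_nonneg hrc.le fun _ _ => abs_nonneg _) fun r' hr' =>
    (intervalIntegral.integral_mono_on hr'.1.le
      (intervalIntegrable_const.sub (h.2.1.intervalIntegrable_of_pos hr0 hr'.1.le)) (hW r' hr'.1.le)
      fun ρ _ => (sub_le_sub_right hr _).trans (le_abs_self _)).trans
    (intervalIntegral.integral_mono_interval le_rfl hr'.1.le hr'.2
      (Eventually.of_forall fun _ => abs_nonneg _) (hW c hrc.le))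
  exact hE.2 c ⟨hrc, le_rfl⟩

/-- The Gronwall estimate makes `u r → u c` along the given points `r`, and lower
semicontinuity of `φ` passes the bound `φ (u r) ≤ φ (u s)` to the limit. -/
lemma toReal_le_of_approx_left (h : IsIntegratedEVISolution φ lam u) (hbot : ∀ y, φ y ≠ ⊥)
    (hlsc : LowerSemicontinuous φ) {s c : ℝ} (hs : 0 < s) (hsc : s ≤ c)
    (happrox : ∀ δ > 0, ∃ r ∈ Ioc (c - δ) c, s ≤ r ∧ (φ (u r)).toReal ≤ (φ (u s)).toReal) :
    (φ (u c)).toReal ≤ (φ (u s)).toReal := by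
  by_contra! hlt
  have hφc : ((φ (u s)).toReal : EReal) < φ (u c) := by
    rwa [← EReal.coe_toReal (h.1 c (hs.trans_le hsc)) (hbot _), EReal.coe_lt_coe_iff]
  obtain ⟨ε, hε, hball⟩ := Metric.eventually_nhds_iff.1 (hlsc (u c) _ hφc)
  have hW : ContinuousWithinAt
      (fun r => ∫ ρ in r..c, |(φ (u s)).toReal - (φ (u ρ)).toReal|) (Icc s c) c := by
    have hint : IntegrableOn (fun ρ => |(φ (u s)).toReal - (φ (u ρ)).toReal|) (uIcc s c) := by
      rw [uIcc_of_le hsc]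
      exact (intervalIntegrable_iff_integrableOn_Icc_of_le hsc).1
        (intervalIntegrable_const.sub (h.2.1.intervalIntegrable_of_pos hs hsc)).abs
    have := intervalIntegral.continuousOn_primitive_interval_left hint
    rw [uIcc_of_le hsc] at this
    exact this c ⟨hsc, le_rfl⟩
  obtain ⟨η, hη, hηW⟩ := Metric.continuousWithinAt_iff.1 hW (ε ^ 2 / 4) (by positivity)
  obtain ⟨r, ⟨hcr, hrc⟩, hsr, hψr⟩ := happrox (min η (1 / (2 * (|lam| + 1)))) (by positivity)
  rcases hrc.eq_or_lt with rfl | hrc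
  · linarith
  have hd := h.dist_sq_le_of_toReal_le hs hsr hrc hψr (abs_mul_le_half_of_le (by linarith)
    (by linarith [min_le_right η (1 / (2 * (|lam| + 1)))]))
  have hWr := hηW ⟨hsr, hrc.le⟩ (by
    rw [Real.dist_eq, abs_of_neg (by linarith)]; linarith [min_le_left η (1 / (2 * (|lam| + 1)))])
  rw [intervalIntegral.integral_same, Real.dist_eq, sub_zero] at hWr
  have hdist : dist (u r) (u c) < ε := by
    rw [dist_comm]
    exact lt_of_pow_lt_pow_left₀ 2 hε.le (by linarith [le_abs_self (∫ ρ in r..c,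
      |(φ (u s)).toReal - (φ (u ρ)).toReal|)])
  have hφr : ((φ (u s)).toReal : EReal) < φ (u r) := hball hdist
  rw [← EReal.coe_toReal (h.1 r (hs.trans_le hsr)) (hbot _), EReal.coe_lt_coe_iff] at hφr
  linarith

lemma antitoneOn_toReal (h : IsIntegratedEVISolution φ lam u) (hbot : ∀ y, φ y ≠ ⊥)
    (hlsc : LowerSemicontinuous φ) : AntitoneOn (fun r => (φ (u r)).toReal) (Ioi 0) := by
  intro s hs t _ hst
  set S := {r | r ∈ Icc s t ∧ (φ (u r)).toReal ≤ (φ (u s)).toReal}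
  have hsS : s ∈ S := ⟨⟨le_rfl, hst⟩, le_rfl⟩
  have hbdd : BddAbove S := ⟨t, fun r hr => hr.1.2⟩
  have hsc : s ≤ sSup S := le_csSup hbdd hsS
  have hct : sSup S ≤ t := csSup_le ⟨s, hsS⟩ fun r hr => hr.1.2
  have hcS : (φ (u (sSup S))).toReal ≤ (φ (u s)).toReal :=
    h.toReal_le_of_approx_left hbot hlsc hs hsc fun δ hδ => by
      obtain ⟨r, hrS, hr⟩ := exists_lt_of_lt_csSup ⟨s, hsS⟩ (sub_lt_self (sSup S) hδ)
      exact ⟨r, ⟨hr, le_csSup hbdd hrS⟩, hrS.1.1, hrS.2⟩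
  rcases hct.eq_or_lt with hct | hct
  · rwa [hct] at hcS
  obtain ⟨x, hx, hψx⟩ := h.exists_toReal_le_of_lt (hs.trans_le hsc) hct
  exact absurd (le_csSup hbdd ⟨⟨hsc.trans hx.1.le, hx.2⟩, hψx.trans hcS⟩) (not_le.2 hx.1)

lemma continuousAt (h : IsIntegratedEVISolution φ lam u)
    (hmono : AntitoneOn (fun r => (φ (u r)).toReal) (Ioi 0)) {x : ℝ} (hx : 0 < x) :
    ContinuousAt u x := by
  set δ := min (x / 2) (1 / (2 * (|lam| + 1)) / 2)
  have hδ : 0 < δ := by positivity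
  have hδx : δ ≤ x / 2 := min_le_left _ _
  have hδl : δ ≤ 1 / (2 * (|lam| + 1)) / 2 := min_le_right _ _
  set Δ := (φ (u (x - δ))).toReal - (φ (u (x + δ))).toReal
  refine continuousAt_of_dist_sq_le (K := 4 * Δ) hδ fun p q hp hpq hq => ?_
  have hp0 : 0 < p := by linarith
  have hψ : ∀ ρ ∈ Icc p q, (φ (u p)).toReal - (φ (u ρ)).toReal ≤ Δ := fun ρ hρ =>
    sub_le_sub (hmono (mem_Ioi.2 (by linarith)) hp0 hp.le)
      (hmono (hp0.trans_le hρ.1) (mem_Ioi.2 (by linarith)) (by linarith [hρ.2]))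
  have hΔ : 0 ≤ Δ := by simpa using hψ p ⟨le_rfl, hpq.le⟩
  have hE := h.dist_sq_le_of_integral_le hp0 hpq (E := (q - p) * Δ)
    (abs_mul_le_half_of_le (by linarith) (by linarith))
    (mul_nonneg (by linarith) hΔ) fun r hr => by
      have := intervalIntegral.integral_mono_on hr.1.le
        (intervalIntegrable_const.sub (h.2.1.intervalIntegrable_of_pos hp0 hr.1.le))
        intervalIntegrable_const fun ρ hρ => hψ ρ ⟨hρ.1, hρ.2.trans hr.2⟩
      rw [intervalIntegral.integral_const, smul_eq_mul] at this
      nlinarith [hr.2]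
  linarith [hE.2 q ⟨hpq, le_rfl⟩]

lemma upperDiniDeriv_le (h : IsIntegratedEVISolution φ lam u) (hbot : ∀ y, φ y ≠ ⊥)
    (hlsc : LowerSemicontinuous φ) (hmono : AntitoneOn (fun r => (φ (u r)).toReal) (Ioi 0))
    (hcont : ContinuousOn u (Ioi 0)) {x : ℝ} (hx : 0 < x) {v : X} (hv : φ v ≠ ⊤) :
    upperDiniDeriv (fun r => dist (u r) v ^ 2) x ≤
      ((2 * ((φ v).toReal - (φ (u x)).toReal) - lam * dist (u x) v ^ 2 : ℝ) : EReal) := by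
  obtain ⟨hmloc, hineq⟩ := h.2.2 v hv
  have hm : ContinuousOn (fun r => dist (u r) v ^ 2) (Ioi 0) := by fun_prop
  have havg : HasDerivAt (fun y => ∫ ρ in x..y, dist (u ρ) v ^ 2) (dist (u x) v ^ 2) x :=
    intervalIntegral.integral_hasDerivAt_right (by simp)
      (hm.stronglyMeasurableAtFilter isOpen_Ioi x hx) (hm.continuousAt (isOpen_Ioi.mem_nhds hx))
  have hψ := tendsto_toReal_comp_add_nhdsGT hbot hlsc h.1 hmono hx
    (hcont.continuousAt (isOpen_Ioi.mem_nhds hx))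
  have hR := ((tendsto_const_nhds (x := 2 * (φ v).toReal)).sub (hψ.const_mul 2)).sub
    ((by simpa [div_eq_inv_mul] using havg.tendsto_slope_zero_right :
      Tendsto (fun r => (∫ ρ in x..x + r, dist (u ρ) v ^ 2) / r) (𝓝[>] 0)
        (𝓝 (dist (u x) v ^ 2))).const_mul lam)
  refine upperDiniDeriv_le_of_tendsto (by convert hR using 2; ring) ?_
  filter_upwards [self_mem_nhdsWithin] with r (hr : 0 < r)
  have hxr : x < x + r := lt_add_of_pos_right x hr
  have hψI := h.2.1.intervalIntegrable_of_pos hx hxr.le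
  have hB := hineq x (x + r) hx hxr
  rw [intervalIntegral.integral_add hψI ((hmloc.intervalIntegrable_of_pos hx hxr.le).const_mul _),
    intervalIntegral.integral_const_mul, add_sub_cancel_left] at hB
  have hψr : r * (φ (u (x + r))).toReal ≤ ∫ ρ in x..x + r, (φ (u ρ)).toReal := by
    have := intervalIntegral.integral_mono_on hxr.le intervalIntegrable_const hψI fun ρ hρ =>
      hmono (hx.trans_le hρ.1) (hx.trans hxr) hρ.2
    rwa [intervalIntegral.integral_const, smul_eq_mul, add_sub_cancel_left] at this
  rw [div_le_iff₀ hr]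
  have : (2 * (φ v).toReal - 2 * (φ (u (x + r))).toReal -
      lam * ((∫ ρ in x..x + r, dist (u ρ) v ^ 2) / r)) * r =
      2 * r * (φ v).toReal - 2 * (r * (φ (u (x + r))).toReal) -
        lam * ∫ ρ in x..x + r, dist (u ρ) v ^ 2 := by
    field_simp
  linarith

lemma isEVISolution (h : IsIntegratedEVISolution φ lam u) (hbot : ∀ y, φ y ≠ ⊥)
    (hlsc : LowerSemicontinuous φ) : IsEVISolution φ lam u := by
  have hmono := h.antitoneOn_toReal hbot hlsc
  have hcont : ContinuousOn u (Ioi 0) := fun _ hx => (h.continuousAt hmono hx).continuousWithinAt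
  exact ⟨hcont, h.1, fun _ hx => (EVIineq_iff hbot (h.1 _ hx)).2
    fun _ hv => h.upperDiniDeriv_le hbot hlsc hmono hcont hx hv⟩

end IsIntegratedEVISolution

end EVI

open MeasureTheory in
theorem stmt9_general {X : Type*} [MetricSpace X] (φ : X → EReal) (lam : ℝ)
    (hbot : ∀ y, φ y ≠ ⊥) (hproper : ∃ y, φ y ≠ ⊤) (hlsc : LowerSemicontinuous φ)
    (u : ℝ → X) :
    letI A : Prop := IsEVISolution φ lam u
    letI B : Prop :=
      (∀ t ∈ Set.Ioi (0:ℝ), φ (u t) ≠ ⊤) ∧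
      LocallyIntegrableOn (fun r => (φ (u r)).toReal) (Set.Ioi 0) ∧
      ∀ v : X, φ v ≠ ⊤ →
        LocallyIntegrableOn (fun r => dist (u r) v ^ 2) (Set.Ioi 0) ∧
        ∀ s t : ℝ, 0 < s → s < t →
          (1 / 2) * dist (u t) v ^ 2 - (1 / 2) * dist (u s) v ^ 2 +
              ∫ r in s..t, ((φ (u r)).toReal + lam / 2 * dist (u r) v ^ 2) ≤
            (t - s) * (φ v).toReal
    letI C : Prop :=
      ∀ s t : ℝ, 0 < s → s < t → ∀ v : X, φ v ≠ ⊤ →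
        ((Real.exp (lam * (t - s)) / 2 * dist (u t) v ^ 2
            - 1 / 2 * dist (u s) v ^ 2 : ℝ) : EReal) ≤
          ((Elam lam (t - s) : ℝ) : EReal) * (φ v - φ (u t))
    (A ↔ B) ∧ (A ↔ C) ∧
      (A → ∀ s t : ℝ, 0 < s → s ≤ t → φ (u t) ≤ φ (u s)) :=
  ⟨⟨fun h => h.isIntegratedEVISolution hbot hlsc,
      fun h => IsIntegratedEVISolution.isEVISolution h hbot hlsc⟩,
    ⟨fun h => h.isExponentialEVISolution hbot hlsc,
      fun h => IsExponentialEVISolution.isEVISolution h hbot hproper hlsc⟩,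
    fun h _ _ hs hst => h.antitoneOn hbot hlsc hs (hs.trans_le hst) hst⟩

open MeasureTheory in
theorem stmt9 {X : Type*} [MetricSpace X] (φ : X → EReal) (lam : ℝ)
    (hbot : ∀ y, φ y ≠ ⊥) (hproper : ∃ y, φ y ≠ ⊤) (hlsc : LowerSemicontinuous φ)
    (u : ℝ → X) (hu : ∀ t ∈ Set.Ioi (0:ℝ), u t ∈ closure {y : X | φ y ≠ ⊤}) :
    letI A : Prop := IsEVISolution φ lam u
    letI B : Prop :=
      (∀ t ∈ Set.Ioi (0:ℝ), φ (u t) ≠ ⊤) ∧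
      LocallyIntegrableOn (fun r => (φ (u r)).toReal) (Set.Ioi 0) ∧
      ∀ v : X, φ v ≠ ⊤ →
        LocallyIntegrableOn (fun r => dist (u r) v ^ 2) (Set.Ioi 0) ∧
        ∀ s t : ℝ, 0 < s → s < t →
          (1 / 2) * dist (u t) v ^ 2 - (1 / 2) * dist (u s) v ^ 2 +
              ∫ r in s..t, ((φ (u r)).toReal + lam / 2 * dist (u r) v ^ 2) ≤
            (t - s) * (φ v).toReal
    letI C : Prop :=
      ∀ s t : ℝ, 0 < s → s < t → ∀ v : X, φ v ≠ ⊤ →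
        ((Real.exp (lam * (t - s)) / 2 * dist (u t) v ^ 2
            - 1 / 2 * dist (u s) v ^ 2 : ℝ) : EReal) ≤
          ((Elam lam (t - s) : ℝ) : EReal) * (φ v - φ (u t))
    (A ↔ B) ∧ (A ↔ C) ∧
      (A → ∀ s t : ℝ, 0 < s → s ≤ t → φ (u t) ≤ φ (u s)) :=
  stmt9_general φ lam hbot hproper hlsc u
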